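/- Let 0 < r < 1/2 and a0 ≥ 0 be real numbers with 2a0 + 2r < 1, and let w0 > 0 satisfy w0^3 = 2a0 w0 + 2r. Define F(w) = (r^3/3) w^3 + r^2 a0 w^2 - 2r^3 a0 w + 4r^3 a0 / w + r^2 a0 / w^2 + 2r^3 / (3w^3). Then F(w0) - F(-r / w0^2) + r^2 (1 - 4a0^2 - 2r^2) · log(w0^3 / r) > 0. (This expression equals the width τ1 = Re ∫_{z2}^{z0} (ξ1(s) - ξ2(s)) ds of the strip domain S1 of the quadratic differential, so τ1 > 0 in the three-cut case.) -/
import Mathlib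


noncomputable section

/-- The primitive `F` (up to the logarithmic term) of `(h(1/w) - a0) h'(w)`. -/
def Fprim (r a0 w : ℝ) : ℝ :=
  (r^3/3)*w^3 + r^2*a0*w^2 - 2*r^3*a0*w + 4*r^3*a0/w + r^2*a0/w^2 + 2*r^3/(3*w^3)

lemma Fprim_eq (r a0 w : ℝ) (hw : w ≠ 0) :
    Fprim r a0 w = (r^3*w^6 + 3*r^2*a0*w^5 - 6*r^3*a0*w^4 + 12*r^3*a0*w^2
      + 3*r^2*a0*w + 2*r^3) / (3*w^3) := by
  unfold Fprim
  field_simp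
  ring

lemma Fprim_neg (r a0 t u : ℝ) (hu : u ≠ 0) (ht : t ≠ 0) :
    Fprim r a0 (-(t/(2*u))) = (-(r^3*t^6) + 6*r^2*a0*t^5*u + 24*r^3*a0*t^4*u^2
      - 192*r^3*a0*t^2*u^4 + 96*r^2*a0*t*u^5 - 128*r^3*u^6) / (24*u^3*t^3) := by
  have h1 : -(t/(2*u)) = (-t)/(2*u) := by ring
  have hnt : (-t) ≠ 0 := neg_ne_zero.2 ht
  unfold Fprim
  rw [h1]
  field_simp
  ring

lemma keypos (x s : ℝ) (hs : 0 < s) (hsx : s ≤ x) (hx1 : x < 1) :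
    0 < s^3*(s^3+6*s^2-8) + x*s^2*(12*s^3-54*s^2+24)
      + x^2*s*(12*s^3-72*s^2+96) + x^3*(-16*s^3+120*s^2+32) := by
  have hx0 : 0 < x := lt_of_lt_of_le hs hsx
  have hs1 : s < 1 := lt_of_le_of_lt hsx hx1
  nlinarith [mul_pos hs (mul_pos hs hs), mul_pos hx0 (mul_pos hx0 hx0),
    mul_nonneg (mul_nonneg hs.le hs.le) (sub_nonneg.2 hsx),
    mul_pos (mul_pos hx0 hx0) hs,
    mul_nonneg (mul_nonneg hx0.le (mul_nonneg hs.le hs.le)) (sub_nonneg.2 hsx),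
    mul_nonneg (mul_nonneg (mul_nonneg hx0.le hx0.le) (mul_nonneg hs.le hs.le))
      (sub_nonneg.2 hsx),
    mul_nonneg (mul_nonneg (mul_nonneg hx0.le hs.le) (mul_nonneg hs.le hs.le))
      (sub_nonneg.2 hs1.le),
    mul_nonneg (mul_nonneg (mul_nonneg (mul_nonneg hx0.le hs.le) hs.le) hs.le)
      (sub_nonneg.2 hs1.le),
    mul_nonneg (mul_nonneg (mul_nonneg (mul_nonneg hx0.le hx0.le) hx0.le) hs.le) hs.le,
    mul_pos (mul_pos (mul_pos hx0 hx0) hx0) (mul_pos hs hs),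
    mul_nonneg (mul_nonneg (mul_nonneg hx0.le hs.le) hs.le)
      (mul_nonneg (sub_nonneg.2 hs1.le) (sub_nonneg.2 hs1.le)),
    mul_nonneg (mul_nonneg (mul_nonneg hx0.le hx0.le) hs.le)
      (mul_nonneg (sub_nonneg.2 hs1.le) (sub_nonneg.2 hs1.le))]

set_option maxHeartbeats 2000000 in
/-- Positivity of the width `τ1` of the strip domain `S1` in the three-cut case:
for `0 < r < 1/2`, `a0 ≥ 0`, `2a0 + 2r < 1` and `w0 > 0` the positive critical point of
`h` (so `w0³ = 2a0 w0 + 2r`), one has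
`F(w0) - F(-r/w0²) + r²(1 - 4a0² - 2r²) log(w0³/r) > 0`. -/
theorem tau1_positive (r a0 w0 : ℝ)
    (hr0 : 0 < r) (hr1 : r < 1/2) (ha : 0 ≤ a0) (hsum : 2*a0 + 2*r < 1)
    (hw0 : 0 < w0) (hcrit : w0^3 = 2*a0*w0 + 2*r) :
    0 < Fprim r a0 w0 - Fprim r a0 (-r/w0^2)
        + r^2*(1 - 4*a0^2 - 2*r^2) * Real.log (w0^3/r) := by
  have hw0' : w0 ≠ 0 := ne_of_gt hw0
  -- w0 < 1
  have hw1 : w0 < 1 := by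
    nlinarith [mul_pos hw0 hw0, mul_pos (mul_pos hw0 hw0) hw0, mul_nonneg ha hw0.le]
  -- express r in terms of w0 and a0
  have hr : r = w0 * (w0^2 - 2*a0) / 2 := by nlinarith [hcrit]
  -- the log term is nonnegative
  have hlog : 0 ≤ r^2*(1 - 4*a0^2 - 2*r^2) * Real.log (w0^3/r) := by
    have hcoef : 0 ≤ 1 - 4*a0^2 - 2*r^2 := by nlinarith [mul_nonneg ha hr0.le]
    have harg : 1 ≤ w0^3 / r := by
      rw [le_div_iff₀ hr0]
      nlinarith [mul_nonneg ha hw0.le]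
    have := Real.log_nonneg harg
    positivity
  -- the Fprim difference is positive
  have hmain : 0 < Fprim r a0 w0 - Fprim r a0 (-r/w0^2) := by
    subst hr
    have hs : 0 < w0^2 - 2*a0 := by
      rcases lt_or_ge 0 (w0^2 - 2*a0) with h | h
      · exact h
      · exfalso; nlinarith
    have hs' : w0^2 - 2*a0 ≠ 0 := ne_of_gt hs
    have hsx : w0^2 - 2*a0 ≤ w0^2 := by nlinarith
    have hx1 : w0^2 < 1 := by nlinarith
    have hw2 : -(w0 * (w0^2 - 2*a0) / 2)/w0^2 ≠ 0 := by
      apply div_ne_zero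
      · simp only [neg_ne_zero]
        positivity
      · positivity
    have hpt : -(w0 * (w0^2 - 2*a0) / 2)/w0^2 = -((w0^2 - 2*a0)/(2*w0)) := by
      field_simp
    have key : 192 * w0^6 * (Fprim (w0 * (w0^2 - 2*a0) / 2) a0 w0
        - Fprim (w0 * (w0^2 - 2*a0) / 2) a0 (-(w0 * (w0^2 - 2*a0) / 2)/w0^2))
        = w0^6 * ((w0^2 - 2*a0)^3*((w0^2 - 2*a0)^3+6*(w0^2 - 2*a0)^2-8)
          + (w0^2)*(w0^2 - 2*a0)^2*(12*(w0^2 - 2*a0)^3-54*(w0^2 - 2*a0)^2+24)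
          + (w0^2)^2*(w0^2 - 2*a0)*(12*(w0^2 - 2*a0)^3-72*(w0^2 - 2*a0)^2+96)
          + (w0^2)^3*(-16*(w0^2 - 2*a0)^3+120*(w0^2 - 2*a0)^2+32)) := by
      rw [hpt, Fprim_eq _ _ _ hw0', Fprim_neg _ _ _ _ hw0' hs']
      field_simp
      ring
    have hpos := keypos (w0^2) (w0^2 - 2*a0) hs hsx hx1
    have h6 : 0 < w0^6 := by positivity
    have h192 : (0:ℝ) < 192 * w0^6 := by positivity
    have h1 : 0 < 192 * w0^6 * (Fprim (w0 * (w0^2 - 2*a0) / 2) a0 w0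
        - Fprim (w0 * (w0^2 - 2*a0) / 2) a0 (-(w0 * (w0^2 - 2*a0) / 2)/w0^2)) := by
      rw [key]; exact mul_pos h6 hpos
    by_contra hcon
    push_neg at hcon
    nlinarith [h1, hcon, h192]
  linarith
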